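/- Let ρ be a two-qubit separable density matrix and let {A_i = a_i·σ}, {B_j = b_j·σ} be complete sets of complementary observables with the same orientation (a_i, b_j right-handed orthonormal bases of ℝ³). Then ⟨1 + A₃⊗B₃⟩_ρ² − ⟨A₃⊗I + I⊗B₃⟩_ρ² − ⟨A₁⊗B₁ + A₂⊗B₂⟩_ρ² ≥ 0. -/

import Mathlib

open scoped ComplexOrder
open Finset

abbrev Q2 := Fin 2 × Fin 2

noncomputable def pσ : Fin 3 → Matrix (Fin 2) (Fin 2) ℂ :=
  ![!![0, 1; 1, 0], !![0, -Complex.I; Complex.I, 0], !![1, 0; 0, -1]]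

/-- `a · σ` for a real vector `a ∈ ℝ³`. -/
noncomputable def dotSigma (a : Fin 3 → ℝ) : Matrix (Fin 2) (Fin 2) ℂ :=
  ∑ k, a k • pσ k

/-- A right-handed orthonormal basis of ℝ³. -/
def RightHandedONB (a : Fin 3 → Fin 3 → ℝ) : Prop :=
  (∀ i j, (∑ k, a i k * a j k) = if i = j then 1 else 0) ∧
    crossProduct (a 0) (a 1) = a 2

/-- Tensor product operator `X ⊗ Y` on `ℂ² ⊗ ℂ²`. -/
noncomputable def op2 (X Y : Matrix (Fin 2) (Fin 2) ℂ) : Matrix Q2 Q2 ℂ :=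
  Matrix.of fun p q => X p.1 q.1 * Y p.2 q.2

/-- `ρ` is a density matrix. -/
def IsDensity {n : Type*} [Fintype n] [DecidableEq n] (ρ : Matrix n n ℂ) : Prop :=
  ρ.PosSemidef ∧ ρ.trace = 1

/-- `ρ` is a separable two-qubit state. -/
def SepState (ρ : Matrix Q2 Q2 ℂ) : Prop :=
  ∃ (N : ℕ) (p : Fin N → ℝ) (ρ1 ρ2 : Fin N → Matrix (Fin 2) (Fin 2) ℂ),
    (∀ k, 0 ≤ p k) ∧ (∑ k, p k = 1) ∧
    (∀ k, IsDensity (ρ1 k)) ∧ (∀ k, IsDensity (ρ2 k)) ∧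
    ρ = ∑ k, p k • op2 (ρ1 k) (ρ2 k)

/-- Expectation value `tr(ρ X)` (real part). -/
noncomputable def expec (ρ X : Matrix Q2 Q2 ℂ) : ℝ := ((ρ * X).trace).re

/-! Expectation values are affine in the state, so it suffices to show that for every product state
`τ₁ ⊗ τ₂` the three expectations `(x, y, z)` lie in the convex cone `x ≥ √(y² + z²)`. Writing
`u`, `v` for the Bloch vectors of `τ₁`, `τ₂` in the bases `a`, `b` (so `|u|, |v| ≤ 1`), these
expectations are `1 + u₃v₃`, `u₃ + v₃` and `u₁v₁ + u₂v₂`, and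
`(1 + u₃v₃)² - (u₃ + v₃)² = (1 - u₃²)(1 - v₃²) ≥ (u₁² + u₂²)(v₁² + v₂²) ≥ (u₁v₁ + u₂v₂)²`. -/

open scoped Kronecker Matrix

lemma op2_eq_kronecker (X Y : Matrix (Fin 2) (Fin 2) ℂ) : op2 X Y = X ⊗ₖ Y := rfl

lemma Matrix.IsHermitian.im_trace_mul_eq_zero {n : Type*} [Fintype n] {A B : Matrix n n ℂ}
    (hA : A.IsHermitian) (hB : B.IsHermitian) : (A * B).trace.im = 0 := by
  rw [← Complex.conj_eq_iff_im, ← Complex.star_def, ← Matrix.trace_conjTranspose,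
    Matrix.conjTranspose_mul, hA.eq, hB.eq, Matrix.trace_mul_comm]

lemma pσ_isHermitian (k : Fin 3) : (pσ k).IsHermitian := by
  ext i j; fin_cases k <;> fin_cases i <;> fin_cases j <;> simp [pσ]

noncomputable def blochVector (τ : Matrix (Fin 2) (Fin 2) ℂ) : Fin 3 → ℝ :=
  fun k => (τ * pσ k).trace.re

lemma trace_mul_dotSigma {τ : Matrix (Fin 2) (Fin 2) ℂ} (hτ : τ.IsHermitian) (a : Fin 3 → ℝ) :
    (τ * dotSigma a).trace = ↑(a ⬝ᵥ blochVector τ) := by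
  have hreal (k : Fin 3) : (τ * pσ k).trace = ↑(blochVector τ k) :=
    Complex.ext rfl <|
      (hτ.im_trace_mul_eq_zero (pσ_isHermitian k)).trans (Complex.ofReal_im _).symm
  simp [dotSigma, Matrix.mul_sum, Matrix.trace_sum, hreal, dotProduct, Complex.real_smul]

lemma IsDensity.blochVector_dotProduct_self_le_one {τ : Matrix (Fin 2) (Fin 2) ℂ}
    (hτ : IsDensity τ) : blochVector τ ⬝ᵥ blochVector τ ≤ 1 := by
  obtain ⟨hpsd, htr⟩ := hτ
  have h00 : (τ 0 0).im = 0 := Complex.conj_eq_iff_im.mp (hpsd.1.apply 0 0)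
  have h11 : (τ 1 1).im = 0 := Complex.conj_eq_iff_im.mp (hpsd.1.apply 1 1)
  have h10 : τ 1 0 = starRingEnd ℂ (τ 0 1) := (hpsd.1.apply 1 0).symm
  have hdiag : (τ 0 0).re + (τ 1 1).re = 1 := by
    simpa [Matrix.trace_fin_two] using congrArg Complex.re htr
  have hdet : (τ 0 1).re ^ 2 + (τ 0 1).im ^ 2 ≤ (τ 0 0).re * (τ 1 1).re := by
    have := (Complex.le_def.mp hpsd.det_nonneg).1
    simp only [Matrix.det_fin_two, h10, Complex.zero_re, Complex.sub_re, Complex.mul_re, h00, h11,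
      Complex.conj_re, Complex.conj_im] at this
    nlinarith
  have hbloch :
      blochVector τ = ![2 * (τ 0 1).re, -2 * (τ 0 1).im, (τ 0 0).re - (τ 1 1).re] := by
    ext k
    fin_cases k <;> simp [blochVector, pσ, Matrix.trace_fin_two, Matrix.mul_apply, h10] <;> ring
  rw [hbloch]
  simp only [dotProduct, Fin.sum_univ_three, Matrix.cons_val_zero, Matrix.cons_val_one,
    Matrix.cons_val]
  nlinarith

lemma Matrix.mulVec_dotProduct_mulVec_self_of_mul_transpose_eq_one {n : Type*} [Fintype n]
    [DecidableEq n] {A : Matrix n n ℝ} (hA : A * Aᵀ = 1) (w : n → ℝ) :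
    A *ᵥ w ⬝ᵥ A *ᵥ w = w ⬝ᵥ w := by
  rw [Matrix.dotProduct_mulVec, ← Matrix.mulVec_transpose, Matrix.mulVec_mulVec,
    mul_eq_one_comm.mp hA, Matrix.one_mulVec]

lemma RightHandedONB.mul_transpose_eq_one {a : Fin 3 → Fin 3 → ℝ} (ha : RightHandedONB a) :
    Matrix.of a * (Matrix.of a)ᵀ = 1 := by
  ext i j
  simpa [Matrix.mul_apply, Matrix.one_apply] using ha.1 i j

lemma expec_add (ρ X Y : Matrix Q2 Q2 ℂ) : expec ρ (X + Y) = expec ρ X + expec ρ Y := by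
  simp [expec, mul_add]

lemma expec_sum_smul {N : ℕ} (p : Fin N → ℝ) (ρ : Fin N → Matrix Q2 Q2 ℂ) (X : Matrix Q2 Q2 ℂ) :
    expec (∑ k, p k • ρ k) X = ∑ k, p k * expec (ρ k) X := by
  simp [expec, Finset.sum_mul, Matrix.trace_sum, Complex.re_sum, Complex.real_smul]

lemma expec_op2_op2 (τ₁ τ₂ X Y : Matrix (Fin 2) (Fin 2) ℂ) :
    expec (op2 τ₁ τ₂) (op2 X Y) = ((τ₁ * X).trace * (τ₂ * Y).trace).re := by
  rw [expec, op2_eq_kronecker, op2_eq_kronecker, ← Matrix.mul_kronecker_mul,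
    Matrix.trace_kronecker]

lemma sq_add_sq_le_of_dotProduct_self_le_one {u v : Fin 3 → ℝ} (hu : u ⬝ᵥ u ≤ 1)
    (hv : v ⬝ᵥ v ≤ 1) :
    0 ≤ 1 + u 2 * v 2 ∧ (u 2 + v 2) ^ 2 + (u 0 * v 0 + u 1 * v 1) ^ 2 ≤ (1 + u 2 * v 2) ^ 2 := by
  simp only [dotProduct, Fin.sum_univ_three] at hu hv
  have hu2 : u 2 ^ 2 ≤ 1 := by nlinarith
  have hv2 : v 2 ^ 2 ≤ 1 := by nlinarith
  refine ⟨by nlinarith [sq_nonneg (u 2 + v 2)], ?_⟩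
  have hprod : (u 0 ^ 2 + u 1 ^ 2) * (v 0 ^ 2 + v 1 ^ 2) ≤ (1 - u 2 ^ 2) * (1 - v 2 ^ 2) :=
    mul_le_mul (by nlinarith) (by nlinarith) (by positivity) (by nlinarith)
  nlinarith [sq_nonneg (u 0 * v 1 - u 1 * v 0)]

lemma IsDensity.expec_op2_nonneg_and_sq_add_sq_le {τ₁ τ₂ : Matrix (Fin 2) (Fin 2) ℂ}
    (h₁ : IsDensity τ₁) (h₂ : IsDensity τ₂) {a b : Fin 3 → Fin 3 → ℝ}
    (ha : Matrix.of a * (Matrix.of a)ᵀ = 1) (hb : Matrix.of b * (Matrix.of b)ᵀ = 1) :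
    0 ≤ expec (op2 τ₁ τ₂) (1 + op2 (dotSigma (a 2)) (dotSigma (b 2))) ∧
    expec (op2 τ₁ τ₂) (op2 (dotSigma (a 2)) 1 + op2 1 (dotSigma (b 2))) ^ 2
      + expec (op2 τ₁ τ₂) (op2 (dotSigma (a 0)) (dotSigma (b 0))
          + op2 (dotSigma (a 1)) (dotSigma (b 1))) ^ 2
      ≤ expec (op2 τ₁ τ₂) (1 + op2 (dotSigma (a 2)) (dotSigma (b 2))) ^ 2 := by
  set u := Matrix.of a *ᵥ blochVector τ₁
  set v := Matrix.of b *ᵥ blochVector τ₂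
  have hu : u ⬝ᵥ u ≤ 1 := by
    rw [Matrix.mulVec_dotProduct_mulVec_self_of_mul_transpose_eq_one ha]
    exact h₁.blochVector_dotProduct_self_le_one
  have hv : v ⬝ᵥ v ≤ 1 := by
    rw [Matrix.mulVec_dotProduct_mulVec_self_of_mul_transpose_eq_one hb]
    exact h₂.blochVector_dotProduct_self_le_one
  have hu_tr (i : Fin 3) : (τ₁ * dotSigma (a i)).trace = ↑(u i) := trace_mul_dotSigma h₁.1.1 _
  have hv_tr (i : Fin 3) : (τ₂ * dotSigma (b i)).trace = ↑(v i) := trace_mul_dotSigma h₂.1.1 _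
  rw [← Matrix.one_kronecker_one, ← op2_eq_kronecker]
  simp only [expec_add, expec_op2_op2, Matrix.mul_one, h₁.2, h₂.2, hu_tr, hv_tr]
  simpa only [mul_one, one_mul, ← Complex.ofReal_mul, Complex.ofReal_re, Complex.one_re] using
    sq_add_sq_le_of_dotProduct_self_le_one hu hv

lemma sq_add_sq_sum_le_sq_sum {ι : Type*} (s : Finset ι) {p x y z : ι → ℝ}
    (hp : ∀ i ∈ s, 0 ≤ p i) (hx : ∀ i ∈ s, 0 ≤ x i) (h : ∀ i ∈ s, y i ^ 2 + z i ^ 2 ≤ x i ^ 2) :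
    (∑ i ∈ s, p i * y i) ^ 2 + (∑ i ∈ s, p i * z i) ^ 2 ≤ (∑ i ∈ s, p i * x i) ^ 2 := by
  -- the Lorentz cone `{(x, y, z) | ‖y + z I‖ ≤ x}` is closed under sums by the triangle inequality
  have hnorm (i : ι) (hi : i ∈ s) :
      ‖((p i * y i : ℝ) : ℂ) + (p i * z i : ℝ) * Complex.I‖ ≤ p i * x i := by
    rw [← sq_le_sq₀ (norm_nonneg _) (mul_nonneg (hp i hi) (hx i hi)), Complex.sq_norm,
      Complex.normSq_add_mul_I]
    nlinarith [h i hi, mul_nonneg (hp i hi) (hp i hi)]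
  have hsum := (norm_sum_le _ _).trans (Finset.sum_le_sum hnorm)
  rw [← sq_le_sq₀ (norm_nonneg _) ((norm_nonneg _).trans hsum), Complex.sq_norm,
    Finset.sum_add_distrib, ← Finset.sum_mul, ← Complex.ofReal_sum, ← Complex.ofReal_sum,
    Complex.normSq_add_mul_I] at hsum
  exact hsum

theorem stmt14_general (ρ : Matrix Q2 Q2 ℂ) (hsep : SepState ρ)
    (a b : Fin 3 → Fin 3 → ℝ) (ha : RightHandedONB a) (hb : RightHandedONB b) :
    0 ≤ expec ρ (1 + op2 (dotSigma (a 2)) (dotSigma (b 2))) ^ 2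
      - expec ρ (op2 (dotSigma (a 2)) 1 + op2 1 (dotSigma (b 2))) ^ 2
      - expec ρ (op2 (dotSigma (a 0)) (dotSigma (b 0))
          + op2 (dotSigma (a 1)) (dotSigma (b 1))) ^ 2 := by
  obtain ⟨N, p, ρ₁, ρ₂, hp, -, h₁, h₂, rfl⟩ := hsep
  have hcone (k : Fin N) := (h₁ k).expec_op2_nonneg_and_sq_add_sq_le (h₂ k)
    ha.mul_transpose_eq_one hb.mul_transpose_eq_one
  simp only [expec_sum_smul]
  linarith [sq_add_sq_sum_le_sq_sum Finset.univ (fun k _ => hp k) (fun k _ => (hcone k).1)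
    (fun k _ => (hcone k).2)]

theorem stmt14 (ρ : Matrix Q2 Q2 ℂ) (hρ : IsDensity ρ) (hsep : SepState ρ)
    (a b : Fin 3 → Fin 3 → ℝ) (ha : RightHandedONB a) (hb : RightHandedONB b) :
    0 ≤ expec ρ (1 + op2 (dotSigma (a 2)) (dotSigma (b 2))) ^ 2
      - expec ρ (op2 (dotSigma (a 2)) 1 + op2 1 (dotSigma (b 2))) ^ 2
      - expec ρ (op2 (dotSigma (a 0)) (dotSigma (b 0))
          + op2 (dotSigma (a 1)) (dotSigma (b 1))) ^ 2 :=
  stmt14_general ρ hsep a b ha hb
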